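/- Let P be a right C-comodule with coaction ρ, π: C → D a coalgebra map, ē = π(e) for a group-like e ∈ C, A = {a ∈ P | (id ⊗ π)∘ρ(a) = a ⊗ ē}, and X = {x ∈ C | (id ⊗ π)∘Δ(x) = x ⊗ ē}. Then the restriction of ρ to A gives a linear isomorphism A ≅ P □_C X, with inverse given by p ⊗ x ↦ p·ε(x). -/
import Mathlib


open TensorProduct

variable (k C D P : Type) [Field k] [AddCommGroup C] [Module k C] [Coalgebra k C]
  [AddCommGroup D] [Module k D] [Coalgebra k D]
  [Ring P] [Algebra k P]

/-- The `ē`-coinvariants `X ⊆ C`. -/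
noncomputable def Xsub (π : C →ₗ[k] D) (eb : D) : Submodule k C :=
  LinearMap.ker
    ((LinearMap.lTensor C π ∘ₗ Coalgebra.comul (R := k) (A := C)) -
      (TensorProduct.mk k C D).flip eb)

/-- The `ē`-coinvariants `A ⊆ P`. -/
noncomputable def Asub (ρ : P →ₗ[k] P ⊗[k] C) (π : C →ₗ[k] D) (eb : D) :
    Submodule k P :=
  LinearMap.ker ((LinearMap.lTensor P π ∘ₗ ρ) - (TensorProduct.mk k P D).flip eb)

/-- The cotensor product `P □_C X`, realised as the submodule of `P ⊗ C` consisting of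
those elements of `P ⊗ X ⊆ P ⊗ C` on which `(ρ ⊗ id)` and `(id ⊗ Δ)` agree. -/
noncomputable def cotenCX (ρ : P →ₗ[k] P ⊗[k] C) (π : C →ₗ[k] D) (eb : D) :
    Submodule k (P ⊗[k] C) :=
  LinearMap.range (LinearMap.lTensor P (Xsub k C D π eb).subtype) ⊓
    LinearMap.ker
      (((TensorProduct.assoc k P C C).toLinearMap ∘ₗ LinearMap.rTensor C ρ) -
        LinearMap.lTensor P (Coalgebra.comul (R := k) (A := C)))

lemma aux_pi (π : C →ₗ[k] D) (eb : D) (x : C) (hx : x ∈ Xsub k C D π eb) :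
    π x = Coalgebra.counit (R := k) x • eb := by
  have hx' : LinearMap.lTensor C π (Coalgebra.comul (R := k) x) = x ⊗ₜ[k] eb := by
    have := hx
    simp only [Xsub, LinearMap.mem_ker, LinearMap.sub_apply, LinearMap.coe_comp,
      Function.comp_apply, sub_eq_zero] at this
    simpa using this
  have h2 : TensorProduct.lid k D ((Coalgebra.counit (R := k) (A := C)).rTensor D
      (LinearMap.lTensor C π (Coalgebra.comul (R := k) x))) =
      TensorProduct.lid k D ((Coalgebra.counit (R := k) (A := C)).rTensor D (x ⊗ₜ[k] eb)) := by
    rw [hx']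
  have hcomm : (Coalgebra.counit (R := k) (A := C)).rTensor D
      (LinearMap.lTensor C π (Coalgebra.comul (R := k) x)) =
      LinearMap.lTensor k π ((Coalgebra.counit (R := k) (A := C)).rTensor C
        (Coalgebra.comul (R := k) x)) := by
    rw [← LinearMap.comp_apply, LinearMap.rTensor_comp_lTensor,
      ← LinearMap.lTensor_comp_rTensor]
    rfl
  rw [hcomm, Coalgebra.rTensor_counit_comul] at h2
  simpa using h2

set_option linter.unusedSectionVars false

lemma L1 (π : C →ₗ[k] D) :
    LinearMap.lTensor P (LinearMap.lTensor C π) ∘ₗ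
        (TensorProduct.assoc k P C C).toLinearMap =
      (TensorProduct.assoc k P C D).toLinearMap ∘ₗ
        LinearMap.lTensor (P ⊗[k] C) π := by
  ext p c c'
  simp

variable (ρ : P →ₗ[k] P ⊗[k] C) (π : C →ₗ[k] D) (eb : D)

lemma L2 :
    LinearMap.lTensor (P ⊗[k] C) π ∘ₗ LinearMap.rTensor C ρ =
      LinearMap.rTensor D ρ ∘ₗ LinearMap.lTensor P π := by
  ext p c
  simp

lemma L3 :
    LinearMap.lTensor P ((TensorProduct.mk k C D).flip eb) =
      (TensorProduct.assoc k P C D).toLinearMap ∘ₗ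
        (TensorProduct.mk k (P ⊗[k] C) D).flip eb := by
  ext p c
  simp

lemma M1 :
    LinearMap.lTensor P ((TensorProduct.rid k C).toLinearMap ∘ₗ
        LinearMap.lTensor C (Coalgebra.counit (R := k) (A := C))) ∘ₗ
        (TensorProduct.assoc k P C C).toLinearMap =
      (TensorProduct.rid k (P ⊗[k] C)).toLinearMap ∘ₗ
        LinearMap.lTensor (P ⊗[k] C) (Coalgebra.counit (R := k) (A := C)) := by
  ext p x c
  simp [TensorProduct.smul_tmul', TensorProduct.tmul_smul]

lemma M2 :
    (TensorProduct.rid k (P ⊗[k] C)).toLinearMap ∘ₗ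
        LinearMap.lTensor (P ⊗[k] C) (Coalgebra.counit (R := k) (A := C)) ∘ₗ
        LinearMap.rTensor C ρ =
      ρ ∘ₗ (TensorProduct.rid k P).toLinearMap ∘ₗ
        LinearMap.lTensor P (Coalgebra.counit (R := k) (A := C)) := by
  ext p c
  simp

lemma M3 :
    LinearMap.lTensor P π ∘ₗ LinearMap.lTensor P (Xsub k C D π eb).subtype =
      (TensorProduct.mk k P D).flip eb ∘ₗ (TensorProduct.rid k P).toLinearMap ∘ₗ
        LinearMap.lTensor P (Coalgebra.counit (R := k) (A := C)) ∘ₗ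
        LinearMap.lTensor P (Xsub k C D π eb).subtype := by
  ext p x
  simp only [LinearMap.coe_comp, Function.comp_apply, AlgebraTensorModule.curry_apply,
    TensorProduct.curry_apply, LinearMap.coe_restrictScalars, LinearMap.lTensor_tmul,
    Submodule.coe_subtype, TensorProduct.rid_tmul, LinearEquiv.coe_coe,
    TensorProduct.mk_apply, LinearMap.flip_apply, map_smul]
  rw [aux_pi k C D π eb x.1 x.2, TensorProduct.tmul_smul, TensorProduct.smul_tmul']

/-- the coaction `ρ` restricts to a linear isomorphism `A ≅ P □_C X`
whose inverse is induced by `p ⊗ x ↦ p·ε(x)`. -/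
theorem stmt5
    (ρ : P →ₗ[k] P ⊗[k] C)
    (hρcounit : ∀ p : P,
      TensorProduct.rid k P
        (LinearMap.lTensor P (Coalgebra.counit (R := k) (A := C)) (ρ p)) = p)
    (hρcoassoc : ∀ p : P,
      TensorProduct.assoc k P C C (LinearMap.rTensor C ρ (ρ p)) =
        LinearMap.lTensor P (Coalgebra.comul (R := k) (A := C)) (ρ p))
    (π : C →ₗ[k] D)
    (hπΔ : ∀ c : C,
      Coalgebra.comul (R := k) (π c) = TensorProduct.map π π (Coalgebra.comul c))
    (hπε : ∀ c : C,
      Coalgebra.counit (R := k) (π c) = Coalgebra.counit (R := k) c)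
    (e : C) (he_counit : Coalgebra.counit (R := k) e = 1)
    (he_comul : Coalgebra.comul (R := k) e = e ⊗ₜ[k] e) :
    (∀ a ∈ Asub k C D P ρ π (π e), ρ a ∈ cotenCX k C D P ρ π (π e)) ∧
    (∀ w ∈ cotenCX k C D P ρ π (π e),
      TensorProduct.rid k P
          (LinearMap.lTensor P (Coalgebra.counit (R := k) (A := C)) w) ∈
        Asub k C D P ρ π (π e) ∧
      ρ (TensorProduct.rid k P
          (LinearMap.lTensor P (Coalgebra.counit (R := k) (A := C)) w)) = w) ∧
    (∀ a ∈ Asub k C D P ρ π (π e),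
      TensorProduct.rid k P
        (LinearMap.lTensor P (Coalgebra.counit (R := k) (A := C)) (ρ a)) = a) := by
  classical
  have hθΔ : ((TensorProduct.rid k C).toLinearMap ∘ₗ
      LinearMap.lTensor C (Coalgebra.counit (R := k) (A := C))) ∘ₗ
      Coalgebra.comul (R := k) (A := C) = LinearMap.id := by
    refine LinearMap.ext fun c => ?_
    simp [Coalgebra.lTensor_counit_comul]
  refine ⟨?_, ?_, fun a _ => hρcounit a⟩
  · -- part 1 : ρ maps A into the cotensor product
    intro a ha
    have ha' : LinearMap.lTensor P π (ρ a) = a ⊗ₜ[k] (π e) := by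
      have := ha
      simp only [Asub, LinearMap.mem_ker, LinearMap.sub_apply, LinearMap.coe_comp,
        Function.comp_apply, sub_eq_zero] at this
      simpa using this
    constructor
    · -- ρ a ∈ P ⊗ X
      have hexact : Function.Exact (Xsub k C D π (π e)).subtype
          ((LinearMap.lTensor C π ∘ₗ Coalgebra.comul (R := k) (A := C)) -
            (TensorProduct.mk k C D).flip (π e)) := by
        rw [LinearMap.exact_iff]
        simp [Xsub, Submodule.range_subtype]
      have h := Module.Flat.lTensor_exact (R := k) P hexact
      refine (h (ρ a)).mp ?_
      rw [LinearMap.lTensor_sub, LinearMap.sub_apply, sub_eq_zero, LinearMap.lTensor_comp,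
        LinearMap.comp_apply, ← hρcoassoc a]
      have e1 := LinearMap.congr_fun (L1 k C D P π) (LinearMap.rTensor C ρ (ρ a))
      have e2 := LinearMap.congr_fun (L2 k C D P ρ π) (ρ a)
      have e3 := LinearMap.congr_fun (L3 k C D P (π e)) (ρ a)
      simp only [LinearMap.comp_apply, LinearEquiv.coe_coe] at e1 e2 e3
      rw [e1, e2, ha', e3, LinearMap.rTensor_tmul]
      rfl
    · -- coassociativity part
      simp only [SetLike.mem_coe, LinearMap.mem_ker, LinearMap.sub_apply, LinearMap.comp_apply,
        LinearEquiv.coe_coe, hρcoassoc a, sub_self]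
  · -- part 2
    intro w hw
    obtain ⟨⟨v, hv⟩, hker⟩ := hw
    have hw2 : TensorProduct.assoc k P C C (LinearMap.rTensor C ρ w) =
        LinearMap.lTensor P (Coalgebra.comul (R := k) (A := C)) w := by
      have := hker
      simp only [SetLike.mem_coe, LinearMap.mem_ker, LinearMap.sub_apply, LinearMap.comp_apply,
        LinearEquiv.coe_coe, sub_eq_zero] at this
      exact this
    have hρa : ρ (TensorProduct.rid k P
        (LinearMap.lTensor P (Coalgebra.counit (R := k) (A := C)) w)) = w := by
      have t1 := congrArg (LinearMap.lTensor P ((TensorProduct.rid k C).toLinearMap ∘ₗ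
        LinearMap.lTensor C (Coalgebra.counit (R := k) (A := C)))) hw2
      have tR : LinearMap.lTensor P ((TensorProduct.rid k C).toLinearMap ∘ₗ
          LinearMap.lTensor C (Coalgebra.counit (R := k) (A := C)))
          (LinearMap.lTensor P (Coalgebra.comul (R := k) (A := C)) w) = w := by
        rw [← LinearMap.comp_apply, ← LinearMap.lTensor_comp, hθΔ, LinearMap.lTensor_id,
          LinearMap.id_apply]
      have e1 := LinearMap.congr_fun (M1 k C P) (LinearMap.rTensor C ρ w)
      have e2 := LinearMap.congr_fun (M2 k C P ρ) w
      simp only [LinearMap.comp_apply, LinearEquiv.coe_coe] at e1 e2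
      rw [tR, e1, e2] at t1
      exact t1
    refine ⟨?_, hρa⟩
    -- membership in A
    simp only [Asub, LinearMap.mem_ker, LinearMap.sub_apply, LinearMap.comp_apply,
      LinearMap.flip_apply, TensorProduct.mk_apply, sub_eq_zero, hρa]
    have e3 := LinearMap.congr_fun (M3 k C D P π (π e)) v
    simp only [LinearMap.comp_apply, LinearMap.flip_apply, TensorProduct.mk_apply,
      LinearEquiv.coe_coe] at e3
    rw [hv] at e3
    exact e3
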